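/- If a BL-algebra A is locally finite (every element x ≠ 1 has finite order), then the identity map is the unique state-operator on A. -/

import Mathlib

/-- A BL-algebra: a bounded lattice with a commutative monoid operation `mul` (⊙, with unit ⊤)
and a residuum `imp` (→) satisfying residuation, divisibility and prelinearity.
The constants 0 and 1 of the BL-algebra are `⊥` and `⊤`. -/
structure BLAlgebra (α : Type*) [Lattice α] [BoundedOrder α] where
  mul : α → α → α
  imp : α → α → α
  mul_comm : ∀ a b : α, mul a b = mul b a
  mul_assoc : ∀ a b c : α, mul (mul a b) c = mul a (mul b c)
  mul_top : ∀ a : α, mul a ⊤ = a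
  le_imp_iff : ∀ a b c : α, c ≤ imp a b ↔ mul a c ≤ b
  inf_eq_mul_imp : ∀ a b : α, a ⊓ b = mul a (imp a b)
  sup_imp_eq_top : ∀ a b : α, imp a b ⊔ imp b a = ⊤

namespace BLAlgebra

variable {α : Type*} [Lattice α] [BoundedOrder α]

/-- Negation `x⁻ := x → 0`. -/
def neg (A : BLAlgebra α) (x : α) : α := A.imp x ⊥

/-- Powers: `x⁰ = 1`, `xⁿ⁺¹ = xⁿ ⊙ x`. -/
def pow (A : BLAlgebra α) (x : α) : ℕ → α
  | 0 => ⊤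
  | n + 1 => A.mul (A.pow x n) x

/-- A state-operator on a BL-algebra. -/
def IsStateOperator (A : BLAlgebra α) (σ : α → α) : Prop :=
  σ ⊥ = ⊥ ∧
  (∀ x y : α, σ (A.imp x y) = A.imp (σ x) (σ (x ⊓ y))) ∧
  (∀ x y : α, σ (A.mul x y) = A.mul (σ x) (σ (A.imp x (A.mul x y)))) ∧
  (∀ x y : α, σ (A.mul (σ x) (σ y)) = A.mul (σ x) (σ y)) ∧
  (∀ x y : α, σ (A.imp (σ x) (σ y)) = A.imp (σ x) (σ y))

/-- A strong state-operator: axioms (1), (2), (3′), (4), (5). -/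
def IsStrongStateOperator (A : BLAlgebra α) (σ : α → α) : Prop :=
  σ ⊥ = ⊥ ∧
  (∀ x y : α, σ (A.imp x y) = A.imp (σ x) (σ (x ⊓ y))) ∧
  (∀ x y : α, σ (A.mul x y) = A.mul (σ x) (σ (A.neg x ⊔ y))) ∧
  (∀ x y : α, σ (A.mul (σ x) (σ y)) = A.mul (σ x) (σ y)) ∧
  (∀ x y : α, σ (A.imp (σ x) (σ y)) = A.imp (σ x) (σ y))

/-- A state-morphism-operator: axioms (1), (2), (4), (5), (6). -/
def IsStateMorphismOperator (A : BLAlgebra α) (σ : α → α) : Prop :=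
  σ ⊥ = ⊥ ∧
  (∀ x y : α, σ (A.imp x y) = A.imp (σ x) (σ (x ⊓ y))) ∧
  (∀ x y : α, σ (A.mul (σ x) (σ y)) = A.mul (σ x) (σ y)) ∧
  (∀ x y : α, σ (A.imp (σ x) (σ y)) = A.imp (σ x) (σ y)) ∧
  (∀ x y : α, σ (A.mul x y) = A.mul (σ x) (σ y))

/-- A filter of a BL-algebra: nonempty, closed under ⊙, upward closed. -/
def IsFilter (A : BLAlgebra α) (F : Set α) : Prop :=
  F.Nonempty ∧ (∀ x ∈ F, ∀ y ∈ F, A.mul x y ∈ F) ∧ ∀ x ∈ F, ∀ y : α, x ≤ y → y ∈ F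

/-- A filter of the subalgebra carried by the subset `S`. -/
def IsFilterOn (A : BLAlgebra α) (S F : Set α) : Prop :=
  F ⊆ S ∧ F.Nonempty ∧ (∀ x ∈ F, ∀ y ∈ F, A.mul x y ∈ F) ∧
    ∀ x ∈ F, ∀ y ∈ S, x ≤ y → y ∈ F

/-- A state-filter of `(A, σ)`: a filter closed under `σ`. -/
def IsStateFilter (A : BLAlgebra α) (σ : α → α) (F : Set α) : Prop :=
  A.IsFilter F ∧ ∀ x ∈ F, σ x ∈ F

/-- A maximal filter: a proper filter not properly contained in any proper filter. -/
def IsMaximalFilter (A : BLAlgebra α) (F : Set α) : Prop :=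
  A.IsFilter F ∧ F ≠ Set.univ ∧
    ∀ G : Set α, A.IsFilter G → G ≠ Set.univ → F ⊆ G → F = G

/-- A maximal filter of the subalgebra carried by `S`. -/
def IsMaximalFilterOn (A : BLAlgebra α) (S F : Set α) : Prop :=
  A.IsFilterOn S F ∧ F ≠ S ∧
    ∀ G : Set α, A.IsFilterOn S G → G ≠ S → F ⊆ G → F = G

/-- A maximal state-filter of `(A, σ)`. -/
def IsMaximalStateFilter (A : BLAlgebra α) (σ : α → α) (F : Set α) : Prop :=
  A.IsStateFilter σ F ∧ F ≠ Set.univ ∧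
    ∀ G : Set α, A.IsStateFilter σ G → G ≠ Set.univ → F ⊆ G → F = G

/-- The radical: the intersection of all maximal filters. -/
def Rad (A : BLAlgebra α) : Set α :=
  {x : α | ∀ F : Set α, A.IsMaximalFilter F → x ∈ F}

/-- The radical of the subalgebra carried by `S`. -/
def RadOn (A : BLAlgebra α) (S : Set α) : Set α :=
  {x : α | x ∈ S ∧ ∀ F : Set α, A.IsMaximalFilterOn S F → x ∈ F}

/-- The kernel of a state-operator. -/
def Ker (_A : BLAlgebra α) (σ : α → α) : Set α := {x : α | σ x = ⊤}

end BLAlgebra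
namespace BLAlgebra

variable {α : Type*} [Lattice α] [BoundedOrder α] (A : BLAlgebra α)

lemma top_mul' (a : α) : A.mul ⊤ a = a := by rw [A.mul_comm, A.mul_top]

lemma imp_top_iff' {a b : α} : A.imp a b = ⊤ ↔ a ≤ b := by
  constructor
  · intro h
    have h2 : (⊤ : α) ≤ A.imp a b := h ▸ le_rfl
    have := (A.le_imp_iff a b ⊤).mp h2
    rwa [A.mul_top] at this
  · intro h
    refine le_antisymm le_top ((A.le_imp_iff a b ⊤).mpr ?_)
    rwa [A.mul_top]

lemma imp_self' (a : α) : A.imp a a = ⊤ := A.imp_top_iff'.mpr le_rfl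

lemma mul_le_left' (a b : α) : A.mul a b ≤ a :=
  (A.le_imp_iff a a b).mp (by rw [A.imp_self']; exact le_top)

lemma bot_mul' (a : α) : A.mul ⊥ a = ⊥ :=
  le_antisymm (A.mul_le_left' ⊥ a) bot_le

lemma mul_le_mul_right' {a b : α} (c : α) (h : a ≤ b) : A.mul c a ≤ A.mul c b :=
  (A.le_imp_iff c (A.mul c b) a).mp (h.trans ((A.le_imp_iff c (A.mul c b) b).mpr le_rfl))

lemma mul_sup' (c a b : α) : A.mul c (a ⊔ b) = A.mul c a ⊔ A.mul c b := by
  apply le_antisymm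
  · exact (A.le_imp_iff _ _ _).mp (sup_le ((A.le_imp_iff _ _ _).mpr le_sup_left)
      ((A.le_imp_iff _ _ _).mpr le_sup_right))
  · exact sup_le (A.mul_le_mul_right' c le_sup_left) (A.mul_le_mul_right' c le_sup_right)

lemma mul_le_sq_sup' (u v : α) : A.mul u v ≤ A.mul u u ⊔ A.mul v v := by
  have h : A.mul (A.mul u v) (A.imp u v ⊔ A.imp v u) = A.mul u v := by
    rw [A.sup_imp_eq_top, A.mul_top]
  rw [← h, A.mul_sup']
  apply sup_le
  · calc A.mul (A.mul u v) (A.imp u v) = A.mul v (A.mul u (A.imp u v)) := by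
          rw [A.mul_comm u v, A.mul_assoc]
      _ = A.mul v (u ⊓ v) := by rw [A.inf_eq_mul_imp]
      _ ≤ A.mul v v := A.mul_le_mul_right' v inf_le_right
      _ ≤ _ := le_sup_right
  · calc A.mul (A.mul u v) (A.imp v u) = A.mul u (A.mul v (A.imp v u)) := by
          rw [A.mul_assoc]
      _ = A.mul u (v ⊓ u) := by rw [A.inf_eq_mul_imp]
      _ ≤ A.mul u u := A.mul_le_mul_right' u inf_le_right
      _ ≤ _ := le_sup_left

lemma pow_add' (x : α) (m n : ℕ) : A.pow x (m + n) = A.mul (A.pow x m) (A.pow x n) := by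
  induction n with
  | zero => simp [pow, A.mul_top]
  | succ n ih =>
      show A.pow x ((m + n) + 1) = _
      rw [pow, ih, pow, A.mul_assoc]

lemma pow_one' (x : α) : A.pow x 1 = x := by
  show A.mul (A.pow x 0) x = x
  rw [pow, A.top_mul']

lemma pow_eq_bot_mono' {x : α} {n m : ℕ} (h : A.pow x n = ⊥) (hle : n ≤ m) :
    A.pow x m = ⊥ := by
  obtain ⟨k, rfl⟩ := Nat.exists_eq_add_of_le hle
  rw [A.pow_add', h, A.bot_mul']

lemma sq_sup_of_sup_top' {a b : α} (h : a ⊔ b = ⊤) : A.mul a a ⊔ A.mul b b = ⊤ := by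
  apply le_antisymm le_top
  have h2 : (⊤ : α) = A.mul (a ⊔ b) (a ⊔ b) := by rw [h, A.mul_top]
  rw [h2, A.mul_sup', A.mul_comm (a ⊔ b) a, A.mul_comm (a ⊔ b) b, A.mul_sup', A.mul_sup']
  apply sup_le <;> apply sup_le
  · exact le_sup_left
  · exact (A.mul_le_sq_sup' a b).trans le_rfl
  · exact (A.mul_le_sq_sup' b a).trans (by rw [sup_comm])
  · exact le_sup_right

lemma pow_two_pow_sup' {a b : α} (h : a ⊔ b = ⊤) (k : ℕ) :
    A.pow a (2 ^ k) ⊔ A.pow b (2 ^ k) = ⊤ := by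
  induction k with
  | zero => simpa [A.pow_one'] using h
  | succ k ih =>
      have h2 : (2 : ℕ) ^ (k + 1) = 2 ^ k + 2 ^ k := by ring
      rw [h2, A.pow_add', A.pow_add']
      exact A.sq_sup_of_sup_top' ih

lemma dichotomy' (hlf : ∀ x : α, x ≠ ⊤ → ∃ n : ℕ, 1 ≤ n ∧ A.pow x n = ⊥)
    (hne : (⊥ : α) ≠ ⊤) {a b : α} (h : a ⊔ b = ⊤) : a = ⊤ ∨ b = ⊤ := by
  by_contra hc
  push_neg at hc
  obtain ⟨n, _, hn⟩ := hlf a hc.1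
  obtain ⟨m, _, hm⟩ := hlf b hc.2
  have hk := A.pow_two_pow_sup' h (n + m)
  have h1 : n ≤ 2 ^ (n + m) := le_trans (Nat.le_add_right n m) (Nat.lt_two_pow_self (n := n + m)).le
  have h2 : m ≤ 2 ^ (n + m) := le_trans (Nat.le_add_left m n) (Nat.lt_two_pow_self (n := n + m)).le
  rw [A.pow_eq_bot_mono' hn h1, A.pow_eq_bot_mono' hm h2, sup_idem] at hk
  exact hne hk

lemma imp_inf_self' (x y : α) : A.imp x (x ⊓ y) = A.imp x y := by
  apply le_antisymm
  · refine (A.le_imp_iff _ _ _).mpr ?_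
    rw [← A.inf_eq_mul_imp]
    exact inf_le_right.trans inf_le_right
  · refine (A.le_imp_iff _ _ _).mpr ?_
    rw [← A.inf_eq_mul_imp, A.inf_eq_mul_imp x y]

end BLAlgebra

/-- on a locally finite BL-algebra, the identity map is the unique
state-operator. -/
theorem locallyFinite_unique_stateOperator {α : Type*} [Lattice α] [BoundedOrder α]
    (A : BLAlgebra α)
    (hlf : ∀ x : α, x ≠ ⊤ → ∃ n : ℕ, 1 ≤ n ∧ A.pow x n = ⊥) :
    A.IsStateOperator id ∧ ∀ σ : α → α, A.IsStateOperator σ → σ = id := by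
  constructor
  · refine ⟨rfl, ?_, ?_, fun x y => rfl, fun x y => rfl⟩
    · intro x y
      simp only [id]
      exact (A.imp_inf_self' x y).symm
    · intro x y
      simp only [id]
      rw [← A.inf_eq_mul_imp]
      exact (inf_eq_right.mpr (A.mul_le_left' x y)).symm
  · intro σ hσ
    obtain ⟨h1, h2, h3, h4, h5⟩ := hσ
    -- trivial case
    by_cases hne : (⊥ : α) = ⊤
    · funext x
      have hx : x = ⊥ := le_antisymm (le_top.trans hne.ge) bot_le
      simp [hx, h1]
    -- basic facts about σ
    have hstop : σ ⊤ = ⊤ := by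
      have h := h2 ⊤ ⊤
      rw [A.imp_self', inf_idem] at h
      rw [h, A.imp_self']
    have hσσ : ∀ z, σ (σ z) = σ z := by
      intro z
      have h := h4 z ⊤
      rwa [hstop, A.mul_top] at h
    have hmulσ : ∀ a b, σ (A.mul a b) ≤ σ a := by
      intro a b
      rw [h3 a b]
      exact A.mul_le_left' _ _
    have hmono : ∀ z w, z ≤ w → σ z ≤ σ w := by
      intro z w hzw
      have hz : z = A.mul w (A.imp w z) := by
        rw [← A.inf_eq_mul_imp, inf_eq_right.mpr hzw]
      rw [hz]
      exact hmulσ w (A.imp w z)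
    -- kernel is trivial
    have hker : ∀ z, σ z = ⊤ → z = ⊤ := by
      intro z hz
      by_contra hzt
      obtain ⟨n, _, hn⟩ := hlf z hzt
      have hpow : ∀ m, σ (A.pow z m) = ⊤ := by
        intro m
        induction m with
        | zero => exact hstop
        | succ m ih =>
            show σ (A.mul (A.pow z m) z) = ⊤
            rw [h3, ih, A.top_mul']
            apply le_antisymm le_top
            have hle : z ≤ A.imp (A.pow z m) (A.mul (A.pow z m) z) :=
              (A.le_imp_iff _ _ _).mpr le_rfl
            exact hz.ge.trans (hmono _ _ hle)
      have := hpow n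
      rw [hn, h1] at this
      exact hne this
    -- main argument
    funext x
    show σ x = x
    have ha : σ (A.imp x (σ x)) = A.imp (σ x) (σ (x ⊓ σ x)) := h2 x (σ x)
    have hb : σ (A.imp (σ x) x) = A.imp (σ x) (σ (x ⊓ σ x)) := by
      have h := h2 (σ x) x
      rwa [hσσ, inf_comm (σ x) x] at h
    rcases A.dichotomy' hlf hne (A.sup_imp_eq_top (σ x) x) with hc | hc
    · -- σ x ≤ x
      have hle : σ x ≤ x := A.imp_top_iff'.mp hc
      have hinf : x ⊓ σ x = σ x := inf_eq_right.mpr hle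
      rw [hinf, hσσ, A.imp_self'] at ha
      exact le_antisymm hle (A.imp_top_iff'.mp (hker _ ha))
    · -- x ≤ σ x
      have hle : x ≤ σ x := A.imp_top_iff'.mp hc
      have hinf : x ⊓ σ x = x := inf_eq_left.mpr hle
      rw [hinf, A.imp_self'] at hb
      exact le_antisymm (A.imp_top_iff'.mp (hker _ hb)) hle
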